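/- Let V, Q be real Hilbert spaces, G, λ > 0, d a positive natural number, and α ∈ ℝ. Let ε : V → Q̃ and D : V → Q be bounded linear maps (playing the role of strain and divergence) such that for all w ∈ V, (2G/d)‖D w‖² + λ‖D w‖² ≤ 2G‖ε w‖² + λ‖D w‖². Suppose w ∈ V and r ∈ Q satisfy 2G⟨ε w, ε v⟩ + λ⟨D w, D v⟩ = α⟨r, D v⟩ for all v ∈ V. Then ‖D w‖ ≤ (α/((2G/d) + λ))‖r‖ (assuming α ≥ 0). -/

import Mathlib

open scoped RealInnerProductSpace

theorem norm_le_div_mul_norm_of_mul_norm_sq_le_inner {E : Type*} [NormedAddCommGroup E]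
    [InnerProductSpace ℝ E] {c α : ℝ} (hc : 0 < c) (hα : 0 ≤ α) {x r : E}
    (h : c * ‖x‖ ^ 2 ≤ α * ⟪r, x⟫) : ‖x‖ ≤ α / c * ‖r‖ := by
  have hcs : c * ‖x‖ * ‖x‖ ≤ α * ‖r‖ * ‖x‖ := by
    calc c * ‖x‖ * ‖x‖ = c * ‖x‖ ^ 2 := by ring
      _ ≤ α * ⟪r, x⟫ := h
      _ ≤ α * (‖r‖ * ‖x‖) := mul_le_mul_of_nonneg_left (real_inner_le_norm r x) hα
      _ = α * ‖r‖ * ‖x‖ := by ring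
  rcases (norm_nonneg x).eq_or_lt with hx | hx
  · rw [← hx]
    positivity
  · rw [div_mul_eq_mul_div, le_div_iff₀ hc, mul_comm]
    exact le_of_mul_le_mul_right hcs hx

theorem div_increment_bound_general {V Q Q' : Type*}
    [NormedAddCommGroup V] [InnerProductSpace ℝ V]
    [NormedAddCommGroup Q] [InnerProductSpace ℝ Q]
    [NormedAddCommGroup Q'] [InnerProductSpace ℝ Q']
    (G lam : ℝ) (hG : 0 < G) (hlam : 0 < lam) (d : ℕ)
    (α : ℝ) (hα : 0 ≤ α)
    (ε : V →L[ℝ] Q') (D : V →L[ℝ] Q)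
    (hcoer : ∀ w : V, (2*G/d) * ‖D w‖^2 + lam * ‖D w‖^2 ≤ 2*G*‖ε w‖^2 + lam * ‖D w‖^2)
    (w : V) (r : Q)
    (heq : ∀ v : V, 2*G*⟪ε w, ε v⟫ + lam * ⟪D w, D v⟫ = α * ⟪r, D v⟫) :
    ‖D w‖ ≤ (α / ((2*G/d) + lam)) * ‖r‖ := by
  apply norm_le_div_mul_norm_of_mul_norm_sq_le_inner (by positivity) hα
  have henergy : 2*G*‖ε w‖^2 + lam * ‖D w‖^2 = α * ⟪r, D w⟫ := by
    simpa only [real_inner_self_eq_norm_sq] using heq w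
  calc ((2*G/d) + lam) * ‖D w‖^2 = (2*G/d) * ‖D w‖^2 + lam * ‖D w‖^2 := by ring
    _ ≤ 2*G*‖ε w‖^2 + lam * ‖D w‖^2 := hcoer w
    _ = α * ⟪r, D w⟫ := henergy

theorem div_increment_bound {V Q Q' : Type*}
    [NormedAddCommGroup V] [InnerProductSpace ℝ V] [CompleteSpace V]
    [NormedAddCommGroup Q] [InnerProductSpace ℝ Q] [CompleteSpace Q]
    [NormedAddCommGroup Q'] [InnerProductSpace ℝ Q'] [CompleteSpace Q']
    (G lam : ℝ) (hG : 0 < G) (hlam : 0 < lam) (d : ℕ) (hd : 0 < d)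
    (α : ℝ) (hα : 0 ≤ α)
    (ε : V →L[ℝ] Q') (D : V →L[ℝ] Q)
    (hcoer : ∀ w : V, (2*G/d) * ‖D w‖^2 + lam * ‖D w‖^2 ≤ 2*G*‖ε w‖^2 + lam * ‖D w‖^2)
    (w : V) (r : Q)
    (heq : ∀ v : V, 2*G*⟪ε w, ε v⟫ + lam * ⟪D w, D v⟫ = α * ⟪r, D v⟫) :
    ‖D w‖ ≤ (α / ((2*G/d) + lam)) * ‖r‖ :=
  div_increment_bound_general G lam hG hlam d α hα ε D hcoer w r heq
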